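/- Let G be a 3-connected graph, let G' be a conservative-quadratic extension of G with new vertices u', v', and suppose {w, z} is a 2-vertex cutset of G' - u'u separating u from u' (with u ∈ one side, u' ∈ the other). Then the whole of G lies on the side containing u, and x ∈ {w, z}, where x is the second neighbour of u' in G. -/

import Mathlib

/-! Deleting the two cut vertices leaves at most two vertices of `G` removed, so by
3-connectivity the rest of `G` stays connected and lies on the side of `u`. If `x` survived,
the edge `u'x` would join `u'` to that side, contradicting the separation. -/

open SimpleGraph Sum

def ThreeConnected {V : Type*} [Fintype V] (G : SimpleGraph V) : Prop :=
  4 ≤ Fintype.card V ∧ ∀ S : Set V, S.ncard ≤ 2 → (G.induce Sᶜ).Connected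

def Bicritical {V : Type*} (G : SimpleGraph V) : Prop :=
  ∀ a b : V, a ≠ b →
    ∃ M : (G.induce ({a, b}ᶜ : Set V)).Subgraph, M.IsPerfectMatching

def consQuadExt {V : Type*} (G : SimpleGraph V) (u v x y : V) :
    SimpleGraph (V ⊕ Bool) :=
  SimpleGraph.fromEdgeSet
    ((Sym2.map inl '' G.edgeSet) ∪
      {s(inr false, inr true), s(inr false, inl u), s(inr false, inl x),
       s(inr true, inl v), s(inr true, inl y)})

theorem Set.ncard_preimage_le_of_injective {α β : Type*} {f : α → β}
    (hf : Function.Injective f) {s : Set β} (hs : s.Finite) : (f ⁻¹' s).ncard ≤ s.ncard := by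
  rw [← Set.ncard_image_of_injective _ hf]
  exact Set.ncard_le_ncard (Set.image_preimage_subset f s) hs

theorem Set.ncard_pair_le {α : Type*} (a b : α) : ({a, b} : Set α).ncard ≤ 2 := by
  simpa using Set.ncard_insert_le a {b}

theorem ThreeConnected.connected_induce_compl_preimage_inl {V W : Type*} [Fintype V]
    {G : SimpleGraph V} (h3 : ThreeConnected G) (w z : V ⊕ W) :
    (G.induce (inl ⁻¹' ({w, z}ᶜ : Set (V ⊕ W)))).Connected :=
  h3.2 _ <| (Set.ncard_preimage_le_of_injective inl_injective
    ((Set.finite_singleton z).insert w)).trans (Set.ncard_pair_le w z)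

theorem SimpleGraph.induce_reachable_inl_of_connected {V W : Type*} {G : SimpleGraph V}
    {H : SimpleGraph (V ⊕ W)} (hGH : ∀ a b, G.Adj a b → H.Adj (inl a) (inl b))
    {T : Set (V ⊕ W)} (hT : (G.induce (inl ⁻¹' T)).Connected) {a b : V}
    (ha : inl a ∈ T) (hb : inl b ∈ T) :
    (H.induce T).Reachable ⟨inl a, ha⟩ ⟨inl b, hb⟩ :=
  let f : G.induce (inl ⁻¹' T) →g H.induce T :=
    ⟨fun p => ⟨inl p.1, p.2⟩, fun hpq => hGH _ _ hpq⟩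
  (hT.preconnected ⟨a, ha⟩ ⟨b, hb⟩).map f

section consQuadExt

variable {V : Type*} {G : SimpleGraph V} {u v x y : V}

theorem consQuadExt_adj_inl_inl {a b : V} :
    (consQuadExt G u v x y).Adj (inl a) (inl b) ↔ G.Adj a b := by
  simp only [consQuadExt, fromEdgeSet_adj, Set.mem_union, Set.mem_image,
    Set.mem_insert_iff, Set.mem_singleton_iff, Sym2.eq, Sym2.rel_iff', ne_eq, inl.injEq]
  constructor
  · rintro ⟨⟨e, he, hab⟩ | h, -⟩
    · induction e using Sym2.ind with
      | h c d =>
        simp only [Sym2.map_mk, Sym2.eq, Sym2.rel_iff', Prod.mk.injEq, inl.injEq] at hab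
        rcases hab with ⟨rfl, rfl⟩ | ⟨rfl, rfl⟩
        exacts [he, he.symm]
    · simp at h
  · exact fun h => ⟨Or.inl ⟨s(a, b), h, rfl⟩, h.ne⟩

theorem consQuadExt_adj_inr_false_inl_x : (consQuadExt G u v x y).Adj (inr false) (inl x) := by
  simp [consQuadExt]

end consQuadExt

theorem stmt_15_general {V : Type*} [Fintype V] (G : SimpleGraph V) (u v x y : V)
    (h3 : ThreeConnected G)
    (hx : x ≠ u)
    (w z : V ⊕ Bool)
    (hu : (inl u : V ⊕ Bool) ∈ ({w, z} : Set (V ⊕ Bool))ᶜ)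
    (hu' : (inr false : V ⊕ Bool) ∈ ({w, z} : Set (V ⊕ Bool))ᶜ)
    (hsep : ¬ (((consQuadExt G u v x y).deleteEdges
          {s((inl u : V ⊕ Bool), inr false)}).induce
        (({w, z} : Set (V ⊕ Bool))ᶜ)).Reachable ⟨inl u, hu⟩ ⟨inr false, hu'⟩) :
    (∀ t : V, ∀ ht : (inl t : V ⊕ Bool) ∈ ({w, z} : Set (V ⊕ Bool))ᶜ,
      (((consQuadExt G u v x y).deleteEdges
          {s((inl u : V ⊕ Bool), inr false)}).induce
        (({w, z} : Set (V ⊕ Bool))ᶜ)).Reachable ⟨inl t, ht⟩ ⟨inl u, hu⟩) ∧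
    (inl x : V ⊕ Bool) ∈ ({w, z} : Set (V ⊕ Bool)) := by
  have hGH : ∀ a b, G.Adj a b → ((consQuadExt G u v x y).deleteEdges
      {s((inl u : V ⊕ Bool), inr false)}).Adj (inl a) (inl b) := fun a b hab => by
    simpa [consQuadExt_adj_inl_inl] using hab
  have hG_side := fun t (ht : inl t ∈ ({w, z}ᶜ : Set (V ⊕ Bool))) =>
    induce_reachable_inl_of_connected hGH (h3.connected_induce_compl_preimage_inl w z) ht hu
  refine ⟨hG_side, by_contra fun hx' => hsep ?_⟩
  have hxu' : (((consQuadExt G u v x y).deleteEdges {s((inl u : V ⊕ Bool), inr false)}).induce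
      (({w, z} : Set (V ⊕ Bool))ᶜ)).Adj ⟨inl x, hx'⟩ ⟨inr false, hu'⟩ := by
    simpa [consQuadExt_adj_inr_false_inl_x.symm, Sym2.eq, Sym2.rel_iff'] using hx
  exact (hG_side x hx').symm.trans hxu'.reachable

theorem stmt_15 {V : Type*} [Fintype V] (G : SimpleGraph V) (u v x y : V)
    (h3 : ThreeConnected G) (huv : u ≠ v) (hadj : ¬ G.Adj u v)
    (hx : x ≠ u) (hy : y ≠ v) (hne : ({u, v} : Set V) ≠ {x, y})
    (w z : V ⊕ Bool) (hwz : w ≠ z)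
    (hu : (inl u : V ⊕ Bool) ∈ ({w, z} : Set (V ⊕ Bool))ᶜ)
    (hu' : (inr false : V ⊕ Bool) ∈ ({w, z} : Set (V ⊕ Bool))ᶜ)
    (hsep : ¬ (((consQuadExt G u v x y).deleteEdges
          {s((inl u : V ⊕ Bool), inr false)}).induce
        (({w, z} : Set (V ⊕ Bool))ᶜ)).Reachable ⟨inl u, hu⟩ ⟨inr false, hu'⟩) :
    (∀ t : V, ∀ ht : (inl t : V ⊕ Bool) ∈ ({w, z} : Set (V ⊕ Bool))ᶜ,
      (((consQuadExt G u v x y).deleteEdges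
          {s((inl u : V ⊕ Bool), inr false)}).induce
        (({w, z} : Set (V ⊕ Bool))ᶜ)).Reachable ⟨inl t, ht⟩ ⟨inl u, hu⟩) ∧
    (inl x : V ⊕ Bool) ∈ ({w, z} : Set (V ⊕ Bool)) :=
  stmt_15_general G u v x y h3 hx w z hu hu' hsep
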